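/- arXiv:1805.03765 — 2 statements merged into one kernel-verified Lean document; each statement's English description precedes it below -/
import Mathlib

section
/- Let A ∈ ℝ^{m×n} have rows a_1,…,a_m and let λ > 0. Then the online λ-ridge leverage scores l_1,…,l_m of the rows of A satisfy Σ_{i=1}^m l_i ≤ 2n·ln(1 + ‖A‖₂²/λ), where ‖A‖₂ is the spectral norm of A. -/
open Matrix

/-- The online `λ`-ridge leverage score of the `i`-th row of `A`:
`min( aᵢ (∑_{j<i} aⱼᵀaⱼ + λI)⁻¹ aᵢᵀ , 1 )`. -/
noncomputable def onlineRidgeScore {m n : ℕ} (A : Matrix (Fin m) (Fin n) ℝ)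
    (lam : ℝ) (i : Fin m) : ℝ :=
  min ((A i) ⬝ᵥ
    (((∑ j : Fin m, if (j : ℕ) < (i : ℕ) then vecMulVec (A j) (A j) else 0)
        + lam • 1)⁻¹ *ᵥ (A i))) 1

/-- The squared spectral norm `‖A‖₂²` of `A`, i.e. the largest eigenvalue of `AᵀA`. -/
noncomputable def spectralNormSq {m n : ℕ} (A : Matrix (Fin m) (Fin n) ℝ) : ℝ :=
  ⨆ i, (Matrix.isHermitian_conjTranspose_mul_self A).eigenvalues i

/-!
Write `Pₖ = ∑_{j<k} aⱼᵀaⱼ + λI` and `xₖ = aₖ Pₖ⁻¹ aₖᵀ ≥ 0`. The matrix determinant lemma gives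
`det Pₖ₊₁ = det Pₖ · (1 + xₖ)`, and `min(x, 1) ≤ 2x/(1+x) ≤ 2 log(1 + x)` for `x ≥ 0`, so the scores
are bounded by the telescoping sum `2 log (det Pₘ / det P₀)`. Finally `det P₀ = λⁿ` and
`det Pₘ = ∏ (λ + μᵢ) ≤ (λ + ‖A‖₂²)ⁿ`, the `μᵢ` being the eigenvalues of `AᵀA`.
-/

open Finset

theorem min_le_two_mul_log_one_add {x : ℝ} (hx : 0 ≤ x) : min x 1 ≤ 2 * Real.log (1 + x) := by
  have hlog := Real.one_sub_inv_le_log_of_pos (x := 1 + x) (by linarith)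
  have hx1 : (0 : ℝ) < 1 + x := by linarith
  suffices min x 1 ≤ 2 * (1 - (1 + x)⁻¹) by linarith
  rw [mul_one_sub, ← div_eq_mul_inv, le_sub_iff_add_le, ← le_sub_iff_add_le', div_le_iff₀ hx1]
  rcases le_total x 1 with h | h
  · rw [min_eq_left h]
    nlinarith
  · rw [min_eq_right h]
    linarith

namespace Matrix

theorem transpose_mul_eq_sum_vecMulVec {α : Type*} [NonUnitalNonAssocSemiring α]
    {m n p : Type*} [Fintype m] (A : Matrix m n α) (B : Matrix m p α) :
    Aᵀ * B = ∑ j, vecMulVec (A j) (B j) := by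
  ext a b
  simp [mul_apply, sum_apply, vecMulVec_apply]

theorem det_add_vecMulVec {α : Type*} [CommRing α] {m : Type*} [Fintype m] [DecidableEq m]
    {A : Matrix m m α} (hA : IsUnit A.det) (u v : m → α) :
    (A + vecMulVec u v).det = A.det * (1 + v ⬝ᵥ (A⁻¹ *ᵥ u)) := by
  rw [vecMulVec_eq Unit, det_add_replicateCol_mul_replicateRow hA, Matrix.mul_assoc,
    ← replicateCol_mulVec]
  congr 1
  rw [det_unique, add_apply, one_apply_eq, replicateRow_mul_replicateCol_apply]

theorem IsHermitian.det_add_smul_one {𝕜 : Type*} [RCLike 𝕜] {n : Type*} [Fintype n]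
    [DecidableEq n] {A : Matrix n n 𝕜} (hA : A.IsHermitian) (c : 𝕜) :
    (A + c • 1).det = ∏ i, (hA.eigenvalues i + c) := by
  have h : A + c • 1 = Unitary.conjStarAlgAut 𝕜 _ hA.eigenvectorUnitary
      (diagonal (RCLike.ofReal ∘ hA.eigenvalues) + c • 1) := by
    conv_lhs => rw [hA.spectral_theorem]
    rw [map_add, map_smul, map_one]
  rw [h, Unitary.conjStarAlgAut_apply, det_mul, det_mul, mul_right_comm, ← det_mul,
    Unitary.mul_star_self_of_mem hA.eigenvectorUnitary.2, det_one, one_mul,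
    smul_one_eq_diagonal, diagonal_add, det_diagonal]
  rfl

end Matrix

section RidgeGram

variable {m n : ℕ} (A : Matrix (Fin m) (Fin n) ℝ) (lam : ℝ)

noncomputable def ridgeGram (k : ℕ) : Matrix (Fin n) (Fin n) ℝ :=
  (∑ j : Fin m, if (j : ℕ) < k then vecMulVec (A j) (A j) else 0) + lam • 1

theorem onlineRidgeScore_eq (i : Fin m) :
    onlineRidgeScore A lam i = min (A i ⬝ᵥ ((ridgeGram A lam i)⁻¹ *ᵥ A i)) 1 :=
  rfl

theorem ridgeGram_zero : ridgeGram A lam 0 = lam • 1 := by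
  simp [ridgeGram]

theorem ridgeGram_of_le {k : ℕ} (hk : m ≤ k) : ridgeGram A lam k = Aᴴ * A + lam • 1 := by
  rw [ridgeGram, conjTranspose_eq_transpose_of_trivial, transpose_mul_eq_sum_vecMulVec]
  congr 1
  exact sum_congr rfl fun j _ => if_pos (j.is_lt.trans_le hk)

theorem ridgeGram_succ (i : Fin m) :
    ridgeGram A lam (i + 1) = ridgeGram A lam i + vecMulVec (A i) (A i) := by
  have split_last : ∀ j : Fin m, (if (j : ℕ) < i + 1 then vecMulVec (A j) (A j) else 0) =
      (if (j : ℕ) < i then vecMulVec (A j) (A j) else 0) +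
        if j = i then vecMulVec (A j) (A j) else 0 := by
    intro j
    split_ifs <;> simp_all [Fin.ext_iff] <;> omega
  simp only [ridgeGram, split_last, sum_add_distrib, sum_ite_eq', mem_univ, if_true]
  abel

variable {lam}

theorem posDef_ridgeGram (hlam : 0 < lam) (k : ℕ) : (ridgeGram A lam k).PosDef := by
  refine PosDef.posSemidef_add (posSemidef_sum _ fun j _ => ?_) ?_
  · split_ifs
    · simpa using posSemidef_vecMulVec_self_star (A j)
    · exact PosSemidef.zero
  · rw [smul_one_eq_diagonal]
    exact posDef_diagonal_iff.mpr fun _ => hlam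

theorem onlineRidgeScore_le_two_mul_log_det_succ_sub (hlam : 0 < lam) (i : Fin m) :
    onlineRidgeScore A lam i ≤
      2 * (Real.log (ridgeGram A lam (i + 1)).det - Real.log (ridgeGram A lam i).det) := by
  have hP := posDef_ridgeGram A hlam i
  have hx : 0 ≤ A i ⬝ᵥ ((ridgeGram A lam i)⁻¹ *ᵥ A i) := by
    simpa using hP.inv.posSemidef.dotProduct_mulVec_nonneg (A i)
  rw [ridgeGram_succ, det_add_vecMulVec hP.det_pos.ne'.isUnit,
    Real.log_mul hP.det_pos.ne' (by positivity), add_sub_cancel_left, onlineRidgeScore_eq]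
  exact min_le_two_mul_log_one_add hx

theorem sum_onlineRidgeScore_le_two_mul_log_det_div (hlam : 0 < lam) :
    ∑ i, onlineRidgeScore A lam i ≤
      2 * Real.log ((ridgeGram A lam m).det / (ridgeGram A lam 0).det) := by
  let f k := Real.log (ridgeGram A lam k).det
  calc ∑ i, onlineRidgeScore A lam i
      ≤ ∑ i : Fin m, 2 * (f (i + 1) - f i) :=
        sum_le_sum fun i _ => onlineRidgeScore_le_two_mul_log_det_succ_sub A hlam i
    _ = 2 * (f m - f 0) := by
        rw [Fin.sum_univ_eq_sum_range (fun k => 2 * (f (k + 1) - f k)), ← mul_sum,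
          sum_range_sub]
    _ = _ := by
        rw [Real.log_div (posDef_ridgeGram A hlam m).det_pos.ne'
          (posDef_ridgeGram A hlam 0).det_pos.ne']

theorem det_ridgeGram_le (hlam : 0 ≤ lam) :
    (ridgeGram A lam m).det ≤ (spectralNormSq A + lam) ^ n := by
  have hA := isHermitian_conjTranspose_mul_self A
  have eig_le : ∀ i, hA.eigenvalues i ≤ spectralNormSq A :=
    le_ciSup (Set.finite_range _).bddAbove
  have eig_nonneg := eigenvalues_conjTranspose_mul_self_nonneg A
  rw [ridgeGram_of_le A lam le_rfl, hA.det_add_smul_one]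
  refine (prod_le_prod (fun i _ => ?_) fun i _ => ?_).trans_eq (Fin.prod_const n _)
  · simpa using add_nonneg (eig_nonneg i) hlam
  · simpa using eig_le i

theorem det_ridgeGram_div_le (hlam : 0 < lam) :
    (ridgeGram A lam m).det / (ridgeGram A lam 0).det ≤ (1 + spectralNormSq A / lam) ^ n := by
  rw [ridgeGram_zero, det_smul, det_one, mul_one, Fintype.card_fin, div_le_iff₀ (by positivity),
    ← mul_pow, one_add_mul, div_mul_cancel₀ _ hlam.ne', add_comm lam]
  exact det_ridgeGram_le A hlam.le

end RidgeGram

/-- **Sum of online ridge leverage scores is bounded:**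
`∑ lᵢ ≤ 2n·ln(1 + ‖A‖₂²/λ)`. -/
theorem sum_onlineRidgeScore_le (m n : ℕ) (lam : ℝ) (hlam : 0 < lam)
    (A : Matrix (Fin m) (Fin n) ℝ) :
    ∑ i : Fin m, onlineRidgeScore A lam i ≤
      2 * n * Real.log (1 + spectralNormSq A / lam) := by
  have hdet_pos : 0 < (ridgeGram A lam m).det / (ridgeGram A lam 0).det :=
    div_pos (posDef_ridgeGram A hlam m).det_pos (posDef_ridgeGram A hlam 0).det_pos
  calc ∑ i, onlineRidgeScore A lam i
      ≤ 2 * Real.log ((ridgeGram A lam m).det / (ridgeGram A lam 0).det) :=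
        sum_onlineRidgeScore_le_two_mul_log_det_div A hlam
    _ ≤ 2 * Real.log ((1 + spectralNormSq A / lam) ^ n) := by
        gcongr
        exact det_ridgeGram_div_le A hlam
    _ = 2 * n * Real.log (1 + spectralNormSq A / lam) := by
        rw [Real.log_pow]; ring
end

section
/- Let A ∈ ℝ^{m×n} have rows a_1,…,a_m and let λ > 0. Define the reverse online λ-ridge leverage score of the i-th row as ℓ_i = a_i (Σ_{j=i}^{m} a_jᵀa_j + λ·I_n)^{-1} a_iᵀ, i.e. the λ-ridge leverage score of a_i with respect to the suffix matrix consisting of rows a_m, a_{m−1}, …, a_i (note each ℓ_i ≤ 1 automatically). Then Σ_{i=1}^m ℓ_i ≤ n·ln(1 + ‖A‖₂²/λ), where ‖A‖₂ is the spectral norm of A. -/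
/-!
Write `Mᵢ = ∑_{j ≥ i} aⱼᵀaⱼ + λI`, so that `M_{i+1} = Mᵢ - aᵢᵀaᵢ`. The matrix determinant lemma
gives `det M_{i+1} = det Mᵢ · (1 - ℓᵢ)`, hence `ℓᵢ ≤ -log (1 - ℓᵢ) = log det Mᵢ - log det M_{i+1}`.
Summing telescopes to `log det (AᵀA + λI) - n log λ`, and
`det (AᵀA + λI) = ∏ₖ (σₖ² + λ) ≤ (‖A‖₂² + λ)ⁿ`.
-/

open Matrix

/-- The reverse online `λ`-ridge leverage score of the `i`-th row of `A`:
the `λ`-ridge leverage score of `aᵢ` with respect to the suffix matrix of rows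
`a_m, a_{m-1}, …, a_i`, namely `aᵢ (∑_{j≥i} aⱼᵀaⱼ + λI)⁻¹ aᵢᵀ`. -/
noncomputable def reverseOnlineRidgeScore {m n : ℕ} (A : Matrix (Fin m) (Fin n) ℝ)
    (lam : ℝ) (i : Fin m) : ℝ :=
  (A i) ⬝ᵥ
    (((∑ j : Fin m, if (i : ℕ) ≤ (j : ℕ) then vecMulVec (A j) (A j) else 0)
        + lam • 1)⁻¹ *ᵥ (A i))

section

variable {ι R : Type*} [Fintype ι] [DecidableEq ι]

theorem Matrix.det_sub_vecMulVec [CommRing R] {B : Matrix ι ι R} (hB : IsUnit B.det)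
    (u v : ι → R) : (B - vecMulVec u v).det = B.det * (1 - v ⬝ᵥ (B⁻¹ *ᵥ u)) := by
  have h := det_add_replicateCol_mul_replicateRow (ι := Unit) hB (-u) v
  rw [← vecMulVec_eq, neg_vecMulVec, ← sub_eq_add_neg] at h
  rw [h, Matrix.mul_assoc, ← replicateCol_mulVec,
    det_unique (1 + replicateRow Unit v * replicateCol Unit (B⁻¹ *ᵥ -u)), add_apply,
    one_apply_eq, replicateRow_mul_replicateCol_apply, mulVec_neg, dotProduct_neg, sub_eq_add_neg]

theorem dotProduct_inv_mulVec_le_log_det_sub {M : Matrix ι ι ℝ} {a : ι → ℝ}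
    (hM : 0 < M.det) (hMa : 0 < (M - vecMulVec a a).det) :
    a ⬝ᵥ (M⁻¹ *ᵥ a) ≤ Real.log M.det - Real.log (M - vecMulVec a a).det := by
  have hratio : (M - vecMulVec a a).det / M.det = 1 - a ⬝ᵥ (M⁻¹ *ᵥ a) := by
    rw [det_sub_vecMulVec (isUnit_iff_ne_zero.mpr hM.ne'), mul_div_cancel_left₀ _ hM.ne']
  have hlog := Real.log_le_sub_one_of_pos (div_pos hMa hM)
  rw [Real.log_div hMa.ne' hM.ne', hratio] at hlog
  linarith

theorem Matrix.IsHermitian.det_add_smul_one_s8 {𝕜 : Type*} [RCLike 𝕜] {A : Matrix ι ι 𝕜}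
    (hA : A.IsHermitian) (c : 𝕜) : (A + c • 1).det = ∏ i, ((hA.eigenvalues i : 𝕜) + c) := by
  have h := congrArg (Polynomial.eval (-c)) hA.charpoly_eq
  rw [eval_charpoly, Polynomial.eval_prod] at h
  simp only [Polynomial.eval_sub, Polynomial.eval_X, Polynomial.eval_C] at h
  have hneg : scalar ι (-c) - A = -(A + c • 1) := by
    rw [scalar_apply, ← smul_one_eq_diagonal, neg_smul]; abel
  rw [hneg, det_neg] at h
  have hprod : ∏ i, (-c - (hA.eigenvalues i : 𝕜)) =
      (-1) ^ Fintype.card ι * ∏ i, ((hA.eigenvalues i : 𝕜) + c) := by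
    rw [← Finset.card_univ, ← Finset.prod_const, ← Finset.prod_mul_distrib]
    exact Finset.prod_congr rfl fun _ _ => by ring
  rw [hprod] at h
  exact mul_left_cancel₀ (pow_ne_zero _ (neg_ne_zero.mpr one_ne_zero)) h

end

/-- `reverseOnlineRidgeScore A lam i` is definitionally `A i ⬝ᵥ (suffixGram A lam i)⁻¹ *ᵥ A i`.
The index ranges over `ℕ` so that the empty suffix `suffixGram A lam m = lam • 1` can end the
telescoping sum. -/
noncomputable def suffixGram {m : ℕ} {ι : Type*} [Fintype ι] [DecidableEq ι]
    (A : Matrix (Fin m) ι ℝ) (lam : ℝ) (i : ℕ) : Matrix ι ι ℝ :=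
  (∑ j : Fin m, if i ≤ (j : ℕ) then vecMulVec (A j) (A j) else 0) + lam • 1

section suffixGram

variable {m : ℕ} {ι : Type*} [Fintype ι] [DecidableEq ι] (A : Matrix (Fin m) ι ℝ) {lam : ℝ}

theorem posDef_suffixGram (hlam : 0 < lam) (i : ℕ) : (suffixGram A lam i).PosDef := by
  refine PosDef.posSemidef_add (posSemidef_sum _ fun j _ => ?_) (PosDef.one.smul hlam)
  split_ifs
  · simpa using posSemidef_vecMulVec_self_star (A j)
  · exact .zero

theorem suffixGram_succ (i : Fin m) :
    suffixGram A lam (i + 1) = suffixGram A lam i - vecMulVec (A i) (A i) := by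
  have hsplit : ∀ j : Fin m, (if (i : ℕ) ≤ j then vecMulVec (A j) (A j) else 0) =
      (if (i : ℕ) + 1 ≤ j then vecMulVec (A j) (A j) else 0) +
        if i = j then vecMulVec (A j) (A j) else 0 := by
    intro j
    split_ifs <;> simp_all [Fin.ext_iff] <;> omega
  simp only [suffixGram, hsplit, Finset.sum_add_distrib, Finset.sum_ite_eq, Finset.mem_univ,
    if_true]
  abel

theorem suffixGram_zero : suffixGram A lam 0 = Aᵀ * A + lam • 1 := by
  ext k l
  simp [suffixGram, mul_apply, Matrix.sum_apply, vecMulVec_apply]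

theorem suffixGram_length : suffixGram A lam m = lam • 1 := by
  simp [suffixGram, Fin.is_lt, not_le_of_gt]

end suffixGram

theorem reverseOnlineRidgeScore_le_log_det_sub {m n : ℕ} {lam : ℝ} (hlam : 0 < lam)
    (A : Matrix (Fin m) (Fin n) ℝ) (i : Fin m) :
    reverseOnlineRidgeScore A lam i ≤
      Real.log (suffixGram A lam i).det - Real.log (suffixGram A lam (i + 1)).det := by
  have hnext := (posDef_suffixGram A hlam (i + 1)).det_pos
  rw [suffixGram_succ] at hnext ⊢
  exact dotProduct_inv_mulVec_le_log_det_sub (posDef_suffixGram A hlam i).det_pos hnext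

theorem sum_reverseOnlineRidgeScore_le_log_det {m n : ℕ} {lam : ℝ} (hlam : 0 < lam)
    (A : Matrix (Fin m) (Fin n) ℝ) :
    ∑ i, reverseOnlineRidgeScore A lam i ≤ Real.log (Aᵀ * A + lam • 1).det - n * Real.log lam := by
  set f : ℕ → ℝ := fun k => Real.log (suffixGram A lam k).det
  calc ∑ i, reverseOnlineRidgeScore A lam i ≤ ∑ i : Fin m, (f i - f (i + 1)) :=
        Finset.sum_le_sum fun i _ => reverseOnlineRidgeScore_le_log_det_sub hlam A i
    _ = f 0 - f m := by
        rw [Fin.sum_univ_eq_sum_range (fun k => f k - f (k + 1)), Finset.sum_range_sub']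
    _ = _ := by
        simp only [f, suffixGram_zero, suffixGram_length, det_smul, det_one, mul_one,
          Fintype.card_fin, Real.log_pow]

theorem spectralNormSq_nonneg {m n : ℕ} (A : Matrix (Fin m) (Fin n) ℝ) : 0 ≤ spectralNormSq A :=
  Real.iSup_nonneg fun i => eigenvalues_conjTranspose_mul_self_nonneg A i

theorem det_transpose_mul_self_add_smul_one_le {m n : ℕ} (A : Matrix (Fin m) (Fin n) ℝ)
    {lam : ℝ} (hlam : 0 ≤ lam) : (Aᵀ * A + lam • 1).det ≤ (spectralNormSq A + lam) ^ n := by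
  have hH := isHermitian_conjTranspose_mul_self A
  rw [← conjTranspose_eq_transpose_of_trivial, hH.det_add_smul_one_s8]
  calc ∏ i, ((hH.eigenvalues i : ℝ) + lam) ≤ ∏ _i : Fin n, (spectralNormSq A + lam) := by
        refine Finset.prod_le_prod (fun i _ => ?_) (fun i _ => ?_)
        · have := eigenvalues_conjTranspose_mul_self_nonneg A i
          positivity
        · gcongr
          exact le_ciSup (Set.finite_range _).bddAbove i
    _ = (spectralNormSq A + lam) ^ n := by simp

/-- **Sum of reverse online ridge leverage scores is bounded:**
`∑ ℓᵢ ≤ n·ln(1 + ‖A‖₂²/λ)`. -/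
theorem sum_reverseOnlineRidgeScore_le (m n : ℕ) (lam : ℝ) (hlam : 0 < lam)
    (A : Matrix (Fin m) (Fin n) ℝ) :
    ∑ i : Fin m, reverseOnlineRidgeScore A lam i ≤
      n * Real.log (1 + spectralNormSq A / lam) := by
  have hdet : 0 < (Aᵀ * A + lam • 1).det :=
    suffixGram_zero A ▸ (posDef_suffixGram A hlam 0).det_pos
  have hs := spectralNormSq_nonneg A
  calc ∑ i, reverseOnlineRidgeScore A lam i
      ≤ Real.log (Aᵀ * A + lam • 1).det - n * Real.log lam :=
        sum_reverseOnlineRidgeScore_le_log_det hlam A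
    _ ≤ Real.log ((spectralNormSq A + lam) ^ n) - n * Real.log lam := by
        gcongr
        exact det_transpose_mul_self_add_smul_one_le A hlam.le
    _ = n * Real.log (1 + spectralNormSq A / lam) := by
        rw [Real.log_pow, ← mul_sub, ← Real.log_div (by positivity) hlam.ne', add_div,
          div_self hlam.ne', add_comm]
end
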